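/- For each integer n ≥ 2, define E_n = { b ∈ ℝ : the polynomial Le_n(x) + b·Le_{n−2}(x) is hyperbolic }. Then E_n has a maximum element, and this maximum is a positive real number; that is, there exists β* > 0 with β* ∈ E_n and b ≤ β* for every b ∈ E_n. -/

import Mathlib

open Polynomial

/-- A real polynomial is *hyperbolic* if all of its complex roots are real
(the zero polynomial and nonzero constants are vacuously hyperbolic). -/
def Hyperbolic (p : Polynomial ℝ) : Prop :=
  ∀ z ∈ (p.map (algebraMap ℝ ℂ)).roots, z.im = 0

/-- `γ` is a multiplier sequence for the simple set `q`: the linear operator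
sending `q k` to `γ k • q k` maps hyperbolic polynomials to hyperbolic
polynomials.  (Since `q` is a simple set, every real polynomial has a unique
expansion `∑ a k • q k`, so this quantification over coefficient families
expresses exactly that property.) -/
def IsMultiplierSeqFor (q : ℕ → Polynomial ℝ) (γ : ℕ → ℝ) : Prop :=
  ∀ (n : ℕ) (a : ℕ → ℝ),
    Hyperbolic (∑ k ∈ Finset.range n, C (a k) * q k) →
    Hyperbolic (∑ k ∈ Finset.range n, C (γ k * a k) * q k)

/-- The Legendre polynomials, via Rodrigues' formula
`Le n = (1/(2^n n!)) Dⁿ[(x²-1)ⁿ]`. -/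
noncomputable def legendre (n : ℕ) : Polynomial ℝ :=
  C (1 / (2 ^ n * n.factorial : ℝ)) * derivative^[n] ((X ^ 2 - 1) ^ n)

/-- A Legendre multiplier sequence. -/
def IsLegendreMS (γ : ℕ → ℝ) : Prop := IsMultiplierSeqFor legendre γ

/-!
Hyperbolicity of a real polynomial means that it splits over `ℝ`. Let `E` be the set of admissible
`b`.

* `E` is bounded above: `Le_n` has no `x^(n-1)` term, so the real roots of
  `Le_n + b Le_(n-2)` sum to zero, and `∑ rᵢ² ≥ 0` then forces its `x^(n-2)` coefficient, which
  increases with `b`, to be `≤ 0`.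
* `E` is closed: a polynomial of degree `d` with leading coefficient `a` is hyperbolic iff
  `|a| |Im z|^d ≤ |p(z)|` for every `z : ℂ`, a closed condition in `b`.
* `E` contains some `b > 0`: by Rolle, `Le_n` has `n` simple real roots; each one is detected by a
  sign change, which survives adding a small multiple of a lower-degree polynomial.

Hence `sSup E` is the maximum of `E`, and it is positive.
-/

open Filter Topology

namespace Multiset

variable {R : Type*} [CommSemiring R]

lemma esymm_cons_succ (a : R) (s : Multiset R) (k : ℕ) :
    (a ::ₘ s).esymm (k + 1) = a * s.esymm k + s.esymm (k + 1) := by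
  simp only [esymm, powersetCard_cons, map_add, sum_add, map_map, Function.comp_def, prod_cons,
    ← sum_map_mul_left]
  exact add_comm _ _

lemma esymm_one (s : Multiset R) : s.esymm 1 = s.sum := by
  simp [esymm, powersetCard_one, map_map]

lemma sum_sq_eq_sum_map_sq_add_two_mul_esymm (s : Multiset R) :
    s.sum ^ 2 = (s.map (· ^ 2)).sum + 2 * s.esymm 2 := by
  induction s using Multiset.induction_on with
  | empty => simp [esymm, powersetCard_zero_right]
  | cons a s ih =>
    rw [sum_cons, map_cons, sum_cons, esymm_cons_succ, esymm_one, add_sq, ih]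
    ring

end Multiset

/-- For the roots `rᵢ` of `p`, this is `e₁² - 2 e₂ = ∑ rᵢ² ≥ 0`. -/
lemma Polynomial.Splits.two_mul_leadingCoeff_mul_coeff_le_sq {p : ℝ[X]} (h : p.Splits)
    (hn : 2 ≤ p.natDegree) :
    2 * p.leadingCoeff * p.coeff (p.natDegree - 2) ≤ p.coeff (p.natDegree - 1) ^ 2 := by
  have h₁ := coeff_eq_esymm_roots_of_splits h (k := p.natDegree - 1) (by omega)
  have h₂ := coeff_eq_esymm_roots_of_splits h (k := p.natDegree - 2) (by omega)
  rw [show p.natDegree - (p.natDegree - 1) = 1 by omega, Multiset.esymm_one] at h₁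
  rw [show p.natDegree - (p.natDegree - 2) = 2 by omega] at h₂
  have hsq := p.roots.sum_sq_eq_sum_map_sq_add_two_mul_esymm
  have hnonneg : 0 ≤ (p.roots.map (· ^ 2)).sum :=
    Multiset.sum_nonneg fun _ hx ↦ by
      obtain ⟨r, -, rfl⟩ := Multiset.mem_map.mp hx
      positivity
  rw [h₁, h₂]
  nlinarith [sq_nonneg p.leadingCoeff]

lemma hyperbolic_iff_splits {p : ℝ[X]} : Hyperbolic p ↔ p.Splits := by
  refine ⟨fun h ↦ Splits.of_splits_map (algebraMap ℝ ℂ) (IsAlgClosed.splits _)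
    fun z hz ↦ ⟨z.re, Complex.ext rfl (h z hz).symm⟩, fun h z hz ↦ ?_⟩
  rw [h.roots_map] at hz
  obtain ⟨r, -, rfl⟩ := Multiset.mem_map.mp hz
  exact Complex.ofReal_im r

lemma abs_leadingCoeff_mul_abs_im_pow_le_norm_aeval {p : ℝ[X]} (h : Hyperbolic p) (z : ℂ) :
    |p.leadingCoeff| * |z.im| ^ p.natDegree ≤ ‖aeval z p‖ := by
  have hsplit : (p.map (algebraMap ℝ ℂ)).Splits := IsAlgClosed.splits _
  have hcard : Multiset.card (p.aroots ℂ) = p.natDegree := by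
    rw [aroots, ← natDegree_map (algebraMap ℝ ℂ), splits_iff_card_roots.mp hsplit]
  have hnorm : ‖((p.aroots ℂ).map (z - ·)).prod‖ = ((p.aroots ℂ).map (‖z - ·‖)).prod :=
    (map_multiset_prod (normHom (α := ℂ)) _).trans (by rw [Multiset.map_map]; rfl)
  rw [hsplit.aeval_eq_prod_aroots, norm_mul, Complex.coe_algebraMap, Complex.norm_real,
    Real.norm_eq_abs, hnorm, ← hcard, ← Multiset.prod_replicate, ← Multiset.map_const']
  refine mul_le_mul_of_nonneg_left (Multiset.prod_map_le_prod_map₀ _ _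
    (fun _ _ ↦ abs_nonneg _) fun a ha ↦ ?_) (abs_nonneg _)
  calc |z.im| = |(z - a).im| := by rw [Complex.sub_im, h a ha, sub_zero]
    _ ≤ ‖z - a‖ := Complex.abs_im_le_norm _

lemma hyperbolic_iff_forall_abs_im_pow_le {p : ℝ[X]} (hp : p ≠ 0) :
    Hyperbolic p ↔ ∀ z : ℂ, |p.leadingCoeff| * |z.im| ^ p.natDegree ≤ ‖aeval z p‖ := by
  refine ⟨abs_leadingCoeff_mul_abs_im_pow_le_norm_aeval, fun h z hz ↦ ?_⟩
  have hroot : aeval z p = 0 := by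
    rw [aeval_def, ← eval_map]; exact (mem_roots (map_ne_zero hp)).mp hz
  have := h z
  rw [hroot, norm_zero] at this
  by_contra him
  have : 0 < |p.leadingCoeff| * |z.im| ^ p.natDegree := by
    have := leadingCoeff_ne_zero.mpr hp
    positivity
  linarith

section Perturbation

variable {p q : ℝ[X]}

lemma degree_C_mul_lt_of_degree_lt (h : q.degree < p.degree) (b : ℝ) :
    (C b * q).degree < p.degree := by
  rw [← smul_eq_C_mul]
  exact (degree_smul_le b q).trans_lt h

lemma natDegree_add_C_mul (h : q.degree < p.degree) (b : ℝ) :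
    (p + C b * q).natDegree = p.natDegree :=
  natDegree_add_eq_left_of_degree_lt (degree_C_mul_lt_of_degree_lt h b)

lemma leadingCoeff_add_C_mul (h : q.degree < p.degree) (b : ℝ) :
    (p + C b * q).leadingCoeff = p.leadingCoeff :=
  leadingCoeff_add_of_degree_lt' (degree_C_mul_lt_of_degree_lt h b)

lemma add_C_mul_ne_zero (h : q.degree < p.degree) (b : ℝ) : p + C b * q ≠ 0 := by
  intro h0
  have := degree_add_eq_left_of_degree_lt (degree_C_mul_lt_of_degree_lt h b)
  rw [h0, degree_zero, eq_comm, degree_eq_bot] at this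
  simp [this] at h

lemma isClosed_setOf_hyperbolic_add_C_mul (h : q.degree < p.degree) :
    IsClosed {b : ℝ | Hyperbolic (p + C b * q)} := by
  simp only [hyperbolic_iff_forall_abs_im_pow_le (add_C_mul_ne_zero h _),
    natDegree_add_C_mul h, leadingCoeff_add_C_mul h, Set.ofPred_forall]
  refine isClosed_iInter fun z ↦ isClosed_le continuous_const ?_
  simp only [map_add, map_mul, aeval_C, Complex.coe_algebraMap]
  fun_prop

end Perturbation

lemma Finset.exists_pos_forall_two_mul_lt_abs_sub (s : Finset ℝ) :
    ∃ δ > 0, ∀ x ∈ s, ∀ y ∈ s, x ≠ y → 2 * δ < |x - y| := by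
  refine Eventually.exists_gt <| (eventually_all_finset s).2 fun x _ ↦
    (eventually_all_finset s).2 fun y _ ↦ ?_
  by_cases hxy : x = y
  · exact .of_forall fun _ h ↦ absurd hxy h
  have hlim : Tendsto (fun δ : ℝ ↦ 2 * δ) (𝓝 0) (𝓝 0) := by
    simpa using (continuous_const_mul (2 : ℝ)).tendsto 0
  exact (hlim.eventually (gt_mem_nhds (abs_pos.2 (sub_ne_zero.2 hxy)))).mono fun _ h _ ↦ h

lemma Polynomial.exists_mem_Ioo_isRoot_of_eval_mul_neg {p : ℝ[X]} {a b : ℝ} (hab : a ≤ b)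
    (h : p.eval a * p.eval b < 0) : ∃ c ∈ Set.Ioo a b, p.IsRoot c := by
  rcases mul_neg_iff.mp h with ⟨ha, hb⟩ | ⟨ha, hb⟩
  · exact intermediate_value_Ioo' hab p.continuousOn_aeval ⟨hb, ha⟩
  · exact intermediate_value_Ioo hab p.continuousOn_aeval ⟨ha, hb⟩

/-- All roots of `p` are real and simple: `p` has `p.natDegree` distinct real roots. -/
def StrictlyHyperbolic (p : ℝ[X]) : Prop :=
  p.natDegree ≤ p.roots.toFinset.card

namespace StrictlyHyperbolic

variable {p q : ℝ[X]}

lemma splits (h : StrictlyHyperbolic p) : p.Splits :=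
  splits_iff_card_roots.mpr <| (card_roots' p).antisymm (h.trans (Multiset.toFinset_card_le _))

lemma hyperbolic (h : StrictlyHyperbolic p) : Hyperbolic p :=
  hyperbolic_iff_splits.mpr h.splits

lemma eval_eq_prod (h : StrictlyHyperbolic p) (t : ℝ) :
    p.eval t = p.leadingCoeff * ∏ r ∈ p.roots.toFinset, (t - r) := by
  have hnodup : p.roots.Nodup := Multiset.toFinset_card_eq_card_iff_nodup.mp <|
    (Multiset.toFinset_card_le _).antisymm ((card_roots' p).trans h)
  rw [h.splits.eval_eq_prod_roots, Finset.prod_eq_multiset_prod, Multiset.toFinset_val,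
    hnodup.dedup]

/-- At distance `δ` on either side of a root `x`, only the factor `t - x` of `p` changes sign. -/
lemma eval_sub_mul_eval_add_neg (h : StrictlyHyperbolic p) {δ : ℝ} (hδ : 0 < δ)
    (hsep : ∀ x ∈ p.roots.toFinset, ∀ y ∈ p.roots.toFinset, x ≠ y → δ < |x - y|)
    {x : ℝ} (hx : x ∈ p.roots.toFinset) :
    p.eval (x - δ) * p.eval (x + δ) < 0 := by
  have hprod : p.eval (x - δ) * p.eval (x + δ) =
      p.leadingCoeff ^ 2 * ∏ y ∈ p.roots.toFinset, ((x - y) ^ 2 - δ ^ 2) := by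
    rw [h.eval_eq_prod, h.eval_eq_prod, mul_mul_mul_comm, ← Finset.prod_mul_distrib, sq]
    congr 1
    exact Finset.prod_congr rfl fun y _ ↦ by ring
  have hlc : p.leadingCoeff ≠ 0 := by
    rintro hlc
    simp [leadingCoeff_eq_zero.mp hlc] at hx
  have hothers : 0 < ∏ y ∈ p.roots.toFinset.erase x, ((x - y) ^ 2 - δ ^ 2) :=
    Finset.prod_pos fun y hy ↦ by
      obtain ⟨hyx, hy⟩ := Finset.mem_erase.mp hy
      have := hsep x hx y hy hyx.symm
      nlinarith [sq_abs (x - y)]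
  rw [hprod, ← Finset.mul_prod_erase _ _ hx, sub_self]
  exact mul_neg_of_pos_of_neg (by positivity)
    (mul_neg_of_neg_of_pos (by nlinarith) hothers)

lemma of_sign_changes {s : Finset ℝ} {δ : ℝ} (hp : p ≠ 0) (hδ : 0 < δ)
    (hdeg : p.natDegree ≤ s.card) (hsep : ∀ x ∈ s, ∀ y ∈ s, x ≠ y → 2 * δ < |x - y|)
    (hsign : ∀ x ∈ s, p.eval (x - δ) * p.eval (x + δ) < 0) : StrictlyHyperbolic p := by
  have hroot (x : ℝ) (hx : x ∈ s) : ∃ z ∈ Set.Ioo (x - δ) (x + δ), p.IsRoot z :=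
    exists_mem_Ioo_isRoot_of_eval_mul_neg (by linarith) (hsign x hx)
  choose! z hz hzroot using hroot
  have hinj : Set.InjOn z s := by
    intro x hx y hy hxy
    by_contra hne
    obtain ⟨hx₁, hx₂⟩ := hz x hx
    obtain ⟨hy₁, hy₂⟩ := hz y hy
    have := hsep x hx y hy hne
    cases abs_cases (x - y) <;> linarith
  calc p.natDegree ≤ s.card := hdeg
    _ = (s.image z).card := (Finset.card_image_of_injOn hinj).symm
    _ ≤ p.roots.toFinset.card := Finset.card_le_card fun _ hw ↦ by
      obtain ⟨x, hx, rfl⟩ := Finset.mem_image.mp hw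
      exact Multiset.mem_toFinset.mpr ((mem_roots hp).mpr (hzroot x hx))

lemma eventually_add_C_mul (h : StrictlyHyperbolic p)
    (hq : q.degree < p.degree) : ∀ᶠ b in 𝓝 (0 : ℝ), StrictlyHyperbolic (p + C b * q) := by
  obtain ⟨δ, hδ, hsep⟩ := p.roots.toFinset.exists_pos_forall_two_mul_lt_abs_sub
  have hsign (x : ℝ) (hx : x ∈ p.roots.toFinset) : p.eval (x - δ) * p.eval (x + δ) < 0 :=
    h.eval_sub_mul_eval_add_neg hδ (fun x hx y hy hxy ↦ by linarith [hsep x hx y hy hxy]) hx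
  have hsign_near : ∀ᶠ b in 𝓝 (0 : ℝ), ∀ x ∈ p.roots.toFinset,
      (p + C b * q).eval (x - δ) * (p + C b * q).eval (x + δ) < 0 := by
    refine (eventually_all_finset _).2 fun x hx ↦ ?_
    have hcont :
        Continuous fun b ↦ (p + C b * q).eval (x - δ) * (p + C b * q).eval (x + δ) := by
      simp only [eval_add, eval_mul, eval_C]
      fun_prop
    exact hcont.continuousAt.eventually_lt continuousAt_const (by simpa using hsign x hx)
  refine hsign_near.mono fun b hb ↦ of_sign_changes (add_C_mul_ne_zero hq b) hδ ?_ hsep hb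
  rw [natDegree_add_C_mul hq b]
  exact h

end StrictlyHyperbolic

section Rodrigues

variable {R : Type*} [CommRing R]

lemma coeff_X_sq_sub_one_pow (n k : ℕ) : ((X ^ 2 - 1 : R[X]) ^ n).coeff k =
    if 2 ∣ k then (-1 : R) ^ (n - k / 2) * n.choose (k / 2) else 0 := by
  have : (X ^ 2 - 1 : R[X]) ^ n = expand R 2 ((X + C (-1)) ^ n) := by
    simp [sub_eq_add_neg]
  rw [this, coeff_expand two_pos, coeff_X_add_C_pow]

lemma natDegree_X_sq_sub_one_pow [Nontrivial R] (n : ℕ) :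
    ((X ^ 2 - 1 : R[X]) ^ n).natDegree = 2 * n := by
  have hmonic : (X ^ 2 - 1 : R[X]).Monic := by
    simpa using monic_X_pow_sub_C (1 : R) two_ne_zero
  rw [hmonic.natDegree_pow, show (X ^ 2 - 1 : R[X]) = X ^ 2 - C 1 by simp,
    natDegree_X_pow_sub_C, mul_comm]

lemma natDegree_iterate_derivative_eq [IsAddTorsionFree R] (p : R[X]) (k : ℕ) :
    (derivative^[k] p).natDegree = p.natDegree - k := by
  induction k with
  | zero => rfl
  | succ k ih => rw [Function.iterate_succ_apply', natDegree_derivative, ih, Nat.sub_sub]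

lemma isRoot_iterate_derivative_X_sq_sub_one_pow {n k : ℕ} (hk : k < n) {x : R}
    (hx : x ^ 2 = 1) : (derivative^[k] ((X ^ 2 - 1 : R[X]) ^ n)).IsRoot x := by
  obtain ⟨r, hr⟩ := pow_sub_dvd_iterate_derivative_pow (X ^ 2 - 1 : R[X]) n k
  rw [IsRoot, hr, eval_mul, eval_pow]
  simp [hx, zero_pow (Nat.sub_ne_zero_of_lt hk)]

end Rodrigues

lemma coeff_legendre (n m : ℕ) : (legendre n).coeff m = 1 / (2 ^ n * n.factorial : ℝ) *
    ((m + n).descFactorial n * ((X ^ 2 - 1 : ℝ[X]) ^ n).coeff (m + n)) := by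
  rw [legendre, coeff_C_mul, coeff_iterate_derivative, nsmul_eq_mul]

lemma natDegree_legendre_le (n : ℕ) : (legendre n).natDegree ≤ n :=
  (natDegree_C_mul_le _ _).trans <| by
    rw [natDegree_iterate_derivative_eq, natDegree_X_sq_sub_one_pow]
    omega

lemma coeff_legendre_self_pos (n : ℕ) : 0 < (legendre n).coeff n := by
  rw [coeff_legendre, ← two_mul, coeff_X_sq_sub_one_pow, if_pos (dvd_mul_right 2 n),
    Nat.mul_div_cancel_left n two_pos, Nat.sub_self, pow_zero, Nat.choose_self]
  have : 0 < (2 * n).descFactorial n := Nat.descFactorial_pos.mpr (by omega)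
  positivity

lemma natDegree_legendre (n : ℕ) : (legendre n).natDegree = n :=
  natDegree_eq_of_le_of_coeff_ne_zero (natDegree_legendre_le n) (coeff_legendre_self_pos n).ne'

lemma leadingCoeff_legendre_pos (n : ℕ) : 0 < (legendre n).leadingCoeff := by
  rw [leadingCoeff, natDegree_legendre]
  exact coeff_legendre_self_pos n

lemma degree_legendre_sub_two_lt {n : ℕ} (hn : 2 ≤ n) :
    (legendre (n - 2)).degree < (legendre n).degree := by
  rw [degree_eq_natDegree (leadingCoeff_ne_zero.mp (leadingCoeff_legendre_pos _).ne'),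
    degree_eq_natDegree (leadingCoeff_ne_zero.mp (leadingCoeff_legendre_pos _).ne'),
    natDegree_legendre, natDegree_legendre]
  exact_mod_cast Nat.sub_lt (by omega) two_pos

lemma coeff_legendre_sub_one {n : ℕ} (hn : 0 < n) : (legendre n).coeff (n - 1) = 0 := by
  rw [coeff_legendre, coeff_X_sq_sub_one_pow, if_neg (by omega), mul_zero, mul_zero]

lemma pair_subset_roots_iterate_derivative_X_sq_sub_one_pow {n k : ℕ} (hk : k < n) :
    ({1, -1} : Finset ℝ) ⊆ (derivative^[k] ((X ^ 2 - 1 : ℝ[X]) ^ n)).roots.toFinset := by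
  have hne : derivative^[k] ((X ^ 2 - 1 : ℝ[X]) ^ n) ≠ 0 := by
    refine ne_zero_of_natDegree_gt (n := 0) ?_
    rw [natDegree_iterate_derivative_eq, natDegree_X_sq_sub_one_pow]
    omega
  intro x hx
  rw [Multiset.mem_toFinset, mem_roots hne]
  simp only [Finset.mem_insert, Finset.mem_singleton] at hx
  exact isRoot_iterate_derivative_X_sq_sub_one_pow hk (by rcases hx with rfl | rfl <;> norm_num)

/-- Rolle: `±1` stay roots, and between consecutive roots of the `k`-th derivative a new one
appears. -/
lemma add_two_le_card_roots_iterate_derivative_X_sq_sub_one_pow {n k : ℕ} (hk : k < n) :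
    k + 2 ≤ (derivative^[k] ((X ^ 2 - 1 : ℝ[X]) ^ n)).roots.toFinset.card := by
  have hcard : ({1, -1} : Finset ℝ).card = 2 := Finset.card_pair_eq_two_iff.mpr (by norm_num)
  induction k with
  | zero =>
    simpa [hcard] using
      Finset.card_le_card (pair_subset_roots_iterate_derivative_X_sq_sub_one_pow hk)
  | succ k ih =>
    set f := derivative^[k] ((X ^ 2 - 1 : ℝ[X]) ^ n)
    set A := f.derivative.roots.toFinset \ f.roots.toFinset
    have hpair := pair_subset_roots_iterate_derivative_X_sq_sub_one_pow hk
    rw [Function.iterate_succ_apply'] at hpair ⊢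
    have hdisj : Disjoint A {1, -1} :=
      Finset.sdiff_disjoint.mono_right
        (pair_subset_roots_iterate_derivative_X_sq_sub_one_pow (by omega))
    have hrolle : f.roots.toFinset.card ≤ A.card + 1 :=
      f.card_roots_toFinset_le_card_roots_derivative_sdiff_roots_succ
    calc k + 1 + 2 ≤ A.card + ({1, -1} : Finset ℝ).card := by
          have := ih (by omega)
          omega
      _ = (A ∪ {1, -1}).card := (Finset.card_union_of_disjoint hdisj).symm
      _ ≤ _ := Finset.card_le_card (Finset.union_subset Finset.sdiff_subset hpair)

lemma strictlyHyperbolic_legendre (n : ℕ) : StrictlyHyperbolic (legendre n) := by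
  rw [StrictlyHyperbolic, natDegree_legendre, legendre, roots_C_mul _ (by positivity)]
  rcases Nat.eq_zero_or_pos n with rfl | hn
  · exact Nat.zero_le _
  obtain ⟨k, rfl⟩ := Nat.exists_eq_add_of_lt hn
  have := add_two_le_card_roots_iterate_derivative_X_sq_sub_one_pow (n := k + 1) k.lt_succ_self
  have := (derivative^[k] ((X ^ 2 - 1 : ℝ[X]) ^ (k + 1))).card_roots_toFinset_le_derivative
  rw [zero_add, Function.iterate_succ_apply']
  omega

lemma le_of_hyperbolic_legendre_add_C_mul {n : ℕ} (hn : 2 ≤ n) {b : ℝ}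
    (h : Hyperbolic (legendre n + C b * legendre (n - 2))) :
    b ≤ -(legendre n).coeff (n - 2) / (legendre (n - 2)).leadingCoeff := by
  have hdeg := degree_legendre_sub_two_lt hn
  have hnewton := (hyperbolic_iff_splits.mp h).two_mul_leadingCoeff_mul_coeff_le_sq
    (by rw [natDegree_add_C_mul hdeg, natDegree_legendre]; exact hn)
  have hlow : (legendre (n - 2)).coeff (n - 1) = 0 :=
    coeff_eq_zero_of_natDegree_lt (by rw [natDegree_legendre]; omega)
  rw [natDegree_add_C_mul hdeg, leadingCoeff_add_C_mul hdeg, natDegree_legendre, coeff_add,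
    coeff_add, coeff_C_mul, coeff_C_mul, coeff_legendre_sub_one (by omega), hlow] at hnewton
  have hlc : (legendre (n - 2)).coeff (n - 2) = (legendre (n - 2)).leadingCoeff := by
    rw [leadingCoeff, natDegree_legendre]
  rw [hlc] at hnewton
  rw [le_div_iff₀ (leadingCoeff_legendre_pos _)]
  nlinarith [leadingCoeff_legendre_pos n]

theorem stmt_6 (n : ℕ) (hn : 2 ≤ n) :
    ∃ β : ℝ, 0 < β ∧ Hyperbolic (legendre n + C β * legendre (n - 2)) ∧
      ∀ b : ℝ, Hyperbolic (legendre n + C b * legendre (n - 2)) → b ≤ β := by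
  set E := {b : ℝ | Hyperbolic (legendre n + C b * legendre (n - 2))}
  have hdeg := degree_legendre_sub_two_lt hn
  have hbdd : BddAbove E := ⟨_, fun b hb ↦ le_of_hyperbolic_legendre_add_C_mul hn hb⟩
  obtain ⟨b₀, hb₀, hb₀E⟩ :=
    ((strictlyHyperbolic_legendre n).eventually_add_C_mul hdeg).exists_gt
  have hmax : sSup E ∈ E :=
    (isClosed_setOf_hyperbolic_add_C_mul hdeg).csSup_mem ⟨b₀, hb₀E.hyperbolic⟩ hbdd
  exact ⟨sSup E, hb₀.trans_le (le_csSup hbdd hb₀E.hyperbolic), hmax,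
    fun b hb ↦ le_csSup hbdd hb⟩
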